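/- Let K, D, λ be positive integers with D < K such that λ divides m = K − D and m divides K − λ; set q = (K−λ)/m. Consider the index coding problem over GF(2) where receiver R_k demands x_k and has side information {x_{k+1}, x_{k+2}, ..., x_{k+D}} (indices mod K in {1,...,K}). Then the code consisting of the m = K − D symbols C_i = x_i + x_{i+m} + x_{i+2m} + ... + x_{i+(q−1)m} + x_{qm+1+((i−1) mod λ)} for i = 1,...,m allows every receiver to decode its demanded message, and each receiver uses at most two broadcast symbols: receivers with k ∈ {1,...,m−λ} decode from C_k + C_{k+λ}, and all other receivers decode from a single symbol. -/
import Mathlib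


/-- Standard basis vector over GF(2) for message index `k` (messages indexed by `ZMod K`,
i.e. index arithmetic is modulo `K`). -/
def e (K : ℕ) (k : ZMod K) : ZMod K → ZMod 2 := Pi.single k 1

/-- Receiver `k` can decode its demanded message `x_k`: the demand vector lies in the GF(2)-span
of the broadcast code symbols `C` together with its side-information messages `side`. -/
def Decodes (K : ℕ) (C : Set (ZMod K → ZMod 2)) (side : Set (ZMod K)) (k : ZMod K) : Prop :=
  e K k ∈ Submodule.span (ZMod 2) (C ∪ e K '' side)

/-- A 0-1 matrix over GF(2) fits the directed graph with edge relation `E`: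
unit diagonal, and zero outside the diagonal and edge set. -/
def Fits {V : Type*} (E : V → V → Prop) (A : Matrix V V (ZMod 2)) : Prop :=
  (∀ i, A i i = 1) ∧ ∀ i j, i ≠ j → ¬ E i j → A i j = 0

lemma addself {K : ℕ} (v : ZMod K → ZMod 2) : v + v = 0 := by
  funext j; rw [← two_mul]; simp [show (2:ZMod 2) = 0 by decide]

lemma castK {K : ℕ} (a : ℕ) : ((a + K : ℕ) : ZMod K) = ((a:ℕ) : ZMod K) := by
  push_cast; simp

lemma cast_of_addK {K : ℕ} (j k s : ℕ) (h : j + K = k + s) :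
    ((j:ℕ) : ZMod K) = ((k + s : ℕ) : ZMod K) := by
  rw [← castK j, h]

lemma side_mem (K D : ℕ) (k j : ℕ) (s : ℕ) (hs1 : 1 ≤ s) (hs2 : s ≤ D)
    (hj : ((j:ℕ) : ZMod K) = ((k + s : ℕ) : ZMod K)) :
    e K ((j:ℕ) : ZMod K) ∈ Submodule.span (ZMod 2)
      (e K '' {j : ZMod K | ∃ t : ℕ, 1 ≤ t ∧ t ≤ D ∧ j = ((k + t : ℕ) : ZMod K)}) :=
  Submodule.subset_span ⟨((j:ℕ) : ZMod K), ⟨s, hs1, hs2, hj⟩, rfl⟩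

lemma decode_of {K : ℕ} (Cset : Set (ZMod K → ZMod 2)) (side : Set (ZMod K)) (k : ZMod K)
    (v r : ZMod K → ZMod 2) (hv : v ∈ Submodule.span (ZMod 2) Cset)
    (hr : r ∈ Submodule.span (ZMod 2) (e K '' side))
    (hE : v = e K k + r) : Decodes K Cset side k := by
  unfold Decodes
  have h : e K k = v - r := by rw [hE]; abel
  rw [h]
  exact sub_mem
    (Submodule.span_mono Set.subset_union_left hv)
    (Submodule.span_mono Set.subset_union_right hr)

lemma decodes_mono {K : ℕ} {C1 C2 : Set (ZMod K → ZMod 2)} {side : Set (ZMod K)} {k : ZMod K}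
    (h : C1 ⊆ C2) (hd : Decodes K C1 side k) : Decodes K C2 side k :=
  Submodule.span_mono (Set.union_subset_union_left _ h) hd

set_option maxHeartbeats 1600000 in
/-- Inner-term decoding: receiver `k = i + t0*m` decodes from `C i` alone, provided
the tail index lies in `[k+1, k+D]`. -/
lemma inner (K D lam m q : ℕ) (hm0 : 0 < m)
    (hK : K = q*m + lam) (hDm : D + m = K)
    (C : ℕ → ZMod K → ZMod 2)
    (hC : ∀ i : ℕ, C i =
      (∑ t ∈ Finset.range q, e K ((i + t * m : ℕ) : ZMod K))
        + e K ((q * m + 1 + (i - 1) % lam : ℕ) : ZMod K))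
    (i t0 k : ℕ) (hi1 : 1 ≤ i) (hi2 : i ≤ m) (ht0 : t0 < q) (hk : k = i + t0*m)
    (hT1 : k + 1 ≤ q*m + 1 + (i-1) % lam) (hT2 : q*m + 1 + (i-1) % lam ≤ k + D) :
    Decodes K {C i} {j : ZMod K | ∃ t : ℕ, 1 ≤ t ∧ t ≤ D ∧ j = ((k + t : ℕ) : ZMod K)}
      ((k : ℕ) : ZMod K) := by
  have hq1 : 1 ≤ q := by omega
  have hqm : 1*m ≤ q*m := Nat.mul_le_mul_right m hq1
  have hq4 : (q-1)*m + 1*m = q*m := by rw [← Nat.add_mul]; congr 1; omega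
  have hv : C i ∈ Submodule.span (ZMod 2) ({C i} : Set (ZMod K → ZMod 2)) :=
    Submodule.subset_span rfl
  apply decode_of _ _ _ (C i)
    ((∑ t ∈ (Finset.range q).erase t0, e K ((i + t * m : ℕ) : ZMod K))
      + e K ((q * m + 1 + (i - 1) % lam : ℕ) : ZMod K))
    hv
  · refine Submodule.add_mem _ (Submodule.sum_mem _ ?_) ?_
    · intro t ht
      simp only [Finset.mem_erase, Finset.mem_range] at ht
      obtain ⟨hne, htq⟩ := ht
      rcases Nat.lt_or_ge t t0 with hlt | hge
      · -- earlier term: offset K - (t0-t)*m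
        have e1 : (t0 - t)*m + t*m = t0*m := by
          rw [← Nat.add_mul]; congr 1; omega
        have e2 : 1*m ≤ (t0-t)*m := Nat.mul_le_mul_right m (by omega)
        have e3 : (t0-t)*m ≤ (q-1)*m := Nat.mul_le_mul_right m (by omega)
        refine side_mem K D k _ (K - (t0-t)*m) (by omega) (by omega)
          (cast_of_addK _ _ _ (by omega))
      · have hgt : t0 < t := by omega
        have e1 : (t - t0)*m + t0*m = t*m := by
          rw [← Nat.add_mul]; congr 1; omega
        have e2 : 1*m ≤ (t-t0)*m := Nat.mul_le_mul_right m (by omega)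
        have e3 : (t-t0)*m ≤ (q-1)*m := Nat.mul_le_mul_right m (by omega)
        refine side_mem K D k _ ((t-t0)*m) (by omega) (by omega) ?_
        have : i + t*m = k + (t-t0)*m := by omega
        rw [this]
    · refine side_mem K D k _ ((q*m + 1 + (i-1) % lam) - k) (by omega) (by omega) ?_
      exact congrArg _ (by omega : q*m + 1 + (i-1) % lam = k + ((q*m + 1 + (i-1) % lam) - k))
  · rw [hC i, ← Finset.add_sum_erase _ _ (Finset.mem_range.mpr ht0), hk, add_assoc]

set_option maxHeartbeats 1600000 in
/-- Tail-term decoding: receiver `k = q*m + i`, `1 ≤ i ≤ lam`, decodes from `C i` alone. -/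
lemma tailcase (K D lam m q : ℕ) (hlam : 0 < lam) (hm0 : 0 < m) (hq1 : 1 ≤ q)
    (hK : K = q*m + lam) (hDm : D + m = K)
    (C : ℕ → ZMod K → ZMod 2)
    (hC : ∀ i : ℕ, C i =
      (∑ t ∈ Finset.range q, e K ((i + t * m : ℕ) : ZMod K))
        + e K ((q * m + 1 + (i - 1) % lam : ℕ) : ZMod K))
    (i k : ℕ) (hi1 : 1 ≤ i) (hi2 : i ≤ lam) (hk : k = q*m + i) :
    Decodes K {C i} {j : ZMod K | ∃ t : ℕ, 1 ≤ t ∧ t ≤ D ∧ j = ((k + t : ℕ) : ZMod K)}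
      ((k : ℕ) : ZMod K) := by
  have hq4 : (q-1)*m + 1*m = q*m := by rw [← Nat.add_mul]; congr 1; omega
  have hv : C i ∈ Submodule.span (ZMod 2) ({C i} : Set (ZMod K → ZMod 2)) :=
    Submodule.subset_span rfl
  apply decode_of _ _ _ (C i)
    (∑ t ∈ Finset.range q, e K ((i + t * m : ℕ) : ZMod K))
    hv
  · refine Submodule.sum_mem _ ?_
    intro t ht
    simp only [Finset.mem_range] at ht
    have e3 : t*m ≤ (q-1)*m := Nat.mul_le_mul_right m (by omega)
    refine side_mem K D k _ (t*m + lam) (by omega) (by omega)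
      (cast_of_addK _ _ _ (by omega))
  · rw [hC i]
    have hT : q*m + 1 + (i-1) % lam = k := by
      rw [Nat.mod_eq_of_lt (by omega)]; omega
    rw [hT, add_comm]

set_option maxHeartbeats 1600000 in
/-- Two-symbol decoding: receiver `k` with `k + lam ≤ m` decodes from `C k + C (k+lam)`. -/
lemma paircase (K D lam m q : ℕ) (hlam : 0 < lam) (hm0 : 0 < m) (hq1 : 1 ≤ q)
    (hK : K = q*m + lam) (hDm : D + m = K)
    (C : ℕ → ZMod K → ZMod 2)
    (hC : ∀ i : ℕ, C i =
      (∑ t ∈ Finset.range q, e K ((i + t * m : ℕ) : ZMod K))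
        + e K ((q * m + 1 + (i - 1) % lam : ℕ) : ZMod K))
    (k : ℕ) (hk1 : 1 ≤ k) (hk2 : k + lam ≤ m) :
    Decodes K {C k, C (k + lam)} {j : ZMod K | ∃ t : ℕ, 1 ≤ t ∧ t ≤ D ∧ j = ((k + t : ℕ) : ZMod K)}
      ((k : ℕ) : ZMod K) := by
  have hqm : 1*m ≤ q*m := Nat.mul_le_mul_right m hq1
  have hq4 : (q-1)*m + 1*m = q*m := by rw [← Nat.add_mul]; congr 1; omega
  apply decode_of _ _ _ (C k + C (k + lam))
    ((∑ t ∈ (Finset.range q).erase 0, e K ((k + t * m : ℕ) : ZMod K))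
      + ∑ t ∈ Finset.range q, e K ((k + lam + t * m : ℕ) : ZMod K))
  · have h1 : C k ∈ ({C k, C (k+lam)} : Set (ZMod K → ZMod 2)) := Set.mem_insert _ _
    have h2 : C (k+lam) ∈ ({C k, C (k+lam)} : Set (ZMod K → ZMod 2)) :=
      Set.mem_insert_of_mem _ rfl
    exact Submodule.add_mem _ (Submodule.subset_span h1) (Submodule.subset_span h2)
  · refine Submodule.add_mem _ (Submodule.sum_mem _ ?_) (Submodule.sum_mem _ ?_)
    · intro t ht
      simp only [Finset.mem_erase, Finset.mem_range] at ht
      obtain ⟨hne, htq⟩ := ht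
      have e2 : 1*m ≤ t*m := Nat.mul_le_mul_right m (by omega)
      have e3 : t*m ≤ (q-1)*m := Nat.mul_le_mul_right m (by omega)
      refine side_mem K D k _ (t*m) (by omega) (by omega) rfl
    · intro t ht
      simp only [Finset.mem_range] at ht
      have e3 : t*m ≤ (q-1)*m := Nat.mul_le_mul_right m (by omega)
      refine side_mem K D k _ (lam + t*m) (by omega) (by omega) ?_
      have : k + lam + t*m = k + (lam + t*m) := by omega
      rw [this]
  · rw [hC k, hC (k + lam)]
    have htail : k + lam - 1 = (k - 1) + lam := by omega
    rw [htail, Nat.add_mod_right]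
    have hsplit : (∑ t ∈ Finset.range q, e K ((k + t * m : ℕ) : ZMod K))
        = e K ((k : ℕ) : ZMod K)
          + ∑ t ∈ (Finset.range q).erase 0, e K ((k + t * m : ℕ) : ZMod K) := by
      rw [← Finset.add_sum_erase _ _ (Finset.mem_range.mpr (by omega : 0 < q))]
      norm_num
    rw [hsplit]
    have h2 : e K ((q * m + 1 + (k - 1) % lam : ℕ) : ZMod K)
        + e K ((q * m + 1 + (k - 1) % lam : ℕ) : ZMod K) = 0 := addself _
    calc (e K ((k:ℕ):ZMod K) + ∑ t ∈ (Finset.range q).erase 0, e K ((k + t * m : ℕ) : ZMod K))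
          + e K ((q * m + 1 + (k - 1) % lam : ℕ) : ZMod K)
          + ((∑ t ∈ Finset.range q, e K ((k + lam + t * m : ℕ) : ZMod K))
            + e K ((q * m + 1 + (k - 1) % lam : ℕ) : ZMod K))
        = e K ((k:ℕ):ZMod K)
          + ((∑ t ∈ (Finset.range q).erase 0, e K ((k + t * m : ℕ) : ZMod K))
            + ∑ t ∈ Finset.range q, e K ((k + lam + t * m : ℕ) : ZMod K))
          + (e K ((q * m + 1 + (k - 1) % lam : ℕ) : ZMod K)
            + e K ((q * m + 1 + (k - 1) % lam : ℕ) : ZMod K)) := by abel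
      _ = _ := by rw [h2, add_zero]

set_option maxHeartbeats 1600000 in
/-- Case VI code `C_i`; every receiver decodes, receivers `k ≤ m - λ` decode
from `C_k + C_{k+λ}` (two symbols), all other receivers from a single symbol. -/
theorem stmt6 (K D lam m q : ℕ) (hlam : 0 < lam) (hD : 0 < D) (hDK : D < K)
    (hm : m = K - D) (hl : lam ∣ m) (hdvd : m ∣ (K - lam)) (hq : q = (K - lam) / m)
    (C : ℕ → ZMod K → ZMod 2)
    (hC : ∀ i : ℕ, C i =
      (∑ t ∈ Finset.range q, e K ((i + t * m : ℕ) : ZMod K))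
        + e K ((q * m + 1 + (i - 1) % lam : ℕ) : ZMod K)) :
    (∀ k : ℕ, 1 ≤ k → k ≤ K →
      Decodes K {v | ∃ i : ℕ, 1 ≤ i ∧ i ≤ m ∧ v = C i}
        {j | ∃ t : ℕ, 1 ≤ t ∧ t ≤ D ∧ j = ((k + t : ℕ) : ZMod K)} ((k : ℕ) : ZMod K)) ∧
    (∀ k : ℕ, 1 ≤ k → k ≤ m - lam →
      Decodes K {C k, C (k + lam)}
        {j | ∃ t : ℕ, 1 ≤ t ∧ t ≤ D ∧ j = ((k + t : ℕ) : ZMod K)} ((k : ℕ) : ZMod K)) ∧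
    (∀ k : ℕ, m - lam < k → k ≤ K →
      ∃ i : ℕ, 1 ≤ i ∧ i ≤ m ∧
        Decodes K {C i}
          {j | ∃ t : ℕ, 1 ≤ t ∧ t ≤ D ∧ j = ((k + t : ℕ) : ZMod K)} ((k : ℕ) : ZMod K)) := by
  have hm0 : 0 < m := by omega
  have hDm : D + m = K := by omega
  have hlm : lam ≤ m := Nat.le_of_dvd hm0 hl
  have hqm : q * m = K - lam := by rw [hq]; exact Nat.div_mul_cancel hdvd
  have hlK : lam ≤ K := by omega
  have hK : K = q * m + lam := by omega
  have hq1 : 1 ≤ q := by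
    rcases Nat.eq_zero_or_pos q with h | h
    · exfalso; rw [h] at hqm; simp at hqm; omega
    · exact h
  have h1m : 1*m ≤ q*m := Nat.mul_le_mul_right m hq1
  have main2 : ∀ k : ℕ, 1 ≤ k → k ≤ m - lam →
      Decodes K {C k, C (k + lam)}
        {j : ZMod K | ∃ t : ℕ, 1 ≤ t ∧ t ≤ D ∧ j = ((k + t : ℕ) : ZMod K)}
        ((k : ℕ) : ZMod K) := by
    intro k hk1 hk2
    exact paircase K D lam m q hlam hm0 hq1 hK hDm C hC k hk1 (by omega)
  have main3 : ∀ k : ℕ, m - lam < k → k ≤ K →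
      ∃ i : ℕ, 1 ≤ i ∧ i ≤ m ∧
        Decodes K {C i}
          {j : ZMod K | ∃ t : ℕ, 1 ≤ t ∧ t ≤ D ∧ j = ((k + t : ℕ) : ZMod K)}
          ((k : ℕ) : ZMod K) := by
    intro k hk1 hk2
    rcases le_or_gt k m with hkm | hkm
    · -- i = k, t0 = 0
      refine ⟨k, by omega, hkm, ?_⟩
      obtain ⟨c, hc⟩ := hl
      have hc1 : 1 ≤ c := by
        rcases Nat.eq_zero_or_pos c with h | h
        · exfalso; rw [h] at hc; simp at hc; omega
        · exact h
      have hmlam : lam * (c - 1) + lam * 1 = lam * c := by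
        rw [← Nat.mul_add]; congr 1; omega
      have hmod : (k - 1) % lam = k - 1 - (m - lam) := by
        have hdc : k - 1 = (k - 1 - (m - lam)) + lam * (c - 1) := by omega
        conv_lhs => rw [hdc]
        rw [Nat.add_mul_mod_self_left, Nat.mod_eq_of_lt (by omega)]
      have hk0 : k = k + 0 * m := by simp
      exact inner K D lam m q hm0 hK hDm C hC k 0 k (by omega) hkm (by omega) hk0
        (by omega) (by omega)
    · rcases le_or_gt k (q*m) with hkq | hkq
      · -- generic inner case
        have hdm := Nat.div_add_mod (k-1) m
        have hmodlt : (k-1) % m < m := Nat.mod_lt _ hm0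
        have hcomm : m * ((k-1)/m) = ((k-1)/m) * m := Nat.mul_comm _ _
        have hk' : k = (k - ((k-1)/m) * m) + ((k-1)/m) * m := by omega
        have hi1 : 1 ≤ k - ((k-1)/m) * m := by omega
        have hi2 : k - ((k-1)/m) * m ≤ m := by omega
        have ht0q : (k-1)/m < q := by
          by_contra h
          push_neg at h
          have : q*m ≤ ((k-1)/m)*m := Nat.mul_le_mul_right m h
          omega
        have ht01 : 1 ≤ (k-1)/m := by
          rcases Nat.eq_zero_or_pos ((k-1)/m) with h | h
          · exfalso; rw [h] at hdm; simp at hdm; omega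
          · exact h
        have h1t0 : 1*m ≤ ((k-1)/m)*m := Nat.mul_le_mul_right m ht01
        have hwle : ((k - ((k-1)/m) * m) - 1) % lam ≤ (k - ((k-1)/m) * m) - 1 :=
          Nat.mod_le _ _
        refine ⟨k - ((k-1)/m) * m, hi1, hi2, ?_⟩
        exact inner K D lam m q hm0 hK hDm C hC _ _ k hi1 hi2 ht0q hk'
          (by omega) (by omega)
      · -- tail case
        refine ⟨k - q*m, by omega, by omega, ?_⟩
        exact tailcase K D lam m q hlam hm0 hq1 hK hDm C hC (k - q*m) k
          (by omega) (by omega) (by omega)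
  refine ⟨?_, main2, main3⟩
  intro k hk1 hk2
  rcases le_or_gt k (m - lam) with h | h
  · refine decodes_mono ?_ (main2 k hk1 h)
    rintro v (rfl | rfl)
    · exact ⟨k, hk1, by omega, rfl⟩
    · exact ⟨k + lam, by omega, by omega, rfl⟩
  · obtain ⟨i, hi1, hi2, hd⟩ := main3 k h hk2
    refine decodes_mono ?_ hd
    rintro v rfl
    exact ⟨i, hi1, hi2, rfl⟩
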